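/- Goodstein's theorem: for every non-decreasing function f : ℕ → ℕ with f(0) ≥ 2 and every m ∈ ℕ, the Goodstein sequence defined by m₀ = m and m_{i+1} = S_{f(i+1)}^{f(i)}(m_i) ∸ 1 eventually terminates, i.e., there exists k such that m_i = 0 for all i ≥ k. -/

import Mathlib

/-!
Goodstein's argument. Let `ordRep b n` be the ordinal obtained by writing `n` in hereditary base
`b` and replacing `b` by `ω`. It is strictly monotone in `n` and unchanged by the hereditary base
change `rebase b c` for `b ≤ c`, so along a sequence with
`g (i + 1) ≤ rebase (b i) (b (i + 1)) (g i) - 1` the ordinals `ordRep (b i) (g i)` strictly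
decrease while `g i ≠ 0`: the sequence reaches `0` and stays there.

The `Sba` of the statement is only bounded by `rebase`: `TOrd` adds the terms of the base-`a`
expansion lowest power first, and ordinal addition absorbs a smaller term on the left
(`Sba 2 3 3 = 3`, while `rebase 2 3 3 = 4`). The bound `Sba a b n ≤ rebase a b n` follows from the
subadditivity `Tb b (x + ω ^ E * q) ≤ Tb b x + b ^ Tb b E * q` on hereditary normal forms.
-/

open Ordinal in
noncomputable def eps0 : Ordinal.{0} := sInf {a : Ordinal | Ordinal.omega0 ^ a = a}

open Classical in
/-- The natural number `n` such that `o = n`, for `o < ω` (else `0`). -/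
noncomputable def onat (o : Ordinal.{0}) : ℕ :=
  if h : o < Ordinal.omega0 then Classical.choose (Ordinal.lt_omega0.mp h) else 0

open Classical Ordinal in
/-- `Tb b α` replaces `ω` by `b` everywhere in the complete Cantor normal form of `α`. -/
noncomputable def Tb (b : ℕ) : Ordinal.{0} → ℕ :=
  WellFounded.fix Ordinal.lt_wf fun α IH =>
    ((Ordinal.CNF omega0 α).map
      (fun p => if h : p.1 < α then b ^ (IH p.1 h) * onat p.2 else 0)).sum

open Classical Ordinal in
/-- `Cmax α` is the highest integer coefficient appearing in the complete
Cantor normal form of `α`. -/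
noncomputable def Cmax : Ordinal.{0} → ℕ :=
  WellFounded.fix Ordinal.lt_wf fun α IH =>
    ((Ordinal.CNF omega0 α).map
      (fun p => max (if h : p.1 < α then IH p.1 h else 0) (onat p.2))).foldr max 0

open Ordinal in
/-- `TOrd b n` is the ordinal obtained by replacing the base `b` with `ω`
everywhere in the complete `b`-representation of `n`. -/
noncomputable def TOrd (b : ℕ) : ℕ → Ordinal.{0} := fun n =>
  Nat.strongRecOn n (fun n IH =>
    ((((Nat.digits b n).zipIdx).map Prod.swap).map
      (fun p => if h : p.1 < n then omega0 ^ (IH p.1 h) * p.2 else 0)).sum)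

/-- `Sba a b n` replaces the base `a` by `b` in the complete `a`-representation of `n`. -/
noncomputable def Sba (a b : ℕ) (n : ℕ) : ℕ := Tb b (TOrd a n)

open Ordinal

namespace Nat

theorem pow_log_pos (b n : ℕ) : 0 < b ^ log b n := by
  rcases Nat.eq_zero_or_pos b with rfl | hb
  · simp
  · positivity

theorem mod_pow_log_lt_self (b : ℕ) {n : ℕ} (hn : n ≠ 0) : n % b ^ log b n < n :=
  (mod_lt n (pow_log_pos b n)).trans_le (pow_log_le_self b hn)

theorem div_pow_log_pos (b : ℕ) {n : ℕ} (hn : n ≠ 0) : 0 < n / b ^ log b n :=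
  div_pos (pow_log_le_self b hn) (pow_log_pos b n)

theorem div_pow_log_lt {b : ℕ} (hb : 1 < b) (n : ℕ) : n / b ^ log b n < b := by
  rw [div_lt_iff_lt_mul (pow_log_pos b n), ← pow_succ']
  exact lt_pow_succ_log_self hb n

theorem log_pow_mul_add {b e q z : ℕ} (hq : 0 < q) (hqb : q < b) (hz : z < b ^ e) :
    log b (b ^ e * q + z) = e := by
  refine log_eq_of_pow_le_of_lt_pow ?_ ?_
  · nlinarith
  · rw [pow_succ]
    nlinarith

end Nat

theorem onat_natCast (k : ℕ) : onat k = k := by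
  rw [onat, dif_pos (natCast_lt_omega0 k)]
  exact_mod_cast (Classical.choose_spec (lt_omega0.{0}.mp (natCast_lt_omega0 k))).symm

theorem Tb_eq (b : ℕ) (α : Ordinal) :
    Tb b α = ((CNF ω α).map
      fun p => if _ : p.1 < α then b ^ Tb b p.1 * onat p.2 else 0).sum :=
  WellFounded.fix_eq _ _ α

@[simp] theorem Tb_zero (b : ℕ) : Tb b 0 = 0 := by
  simp [Tb_eq]

theorem Tb_eq_sum_of_forall_lt (b : ℕ) {α : Ordinal} (h : ∀ p ∈ CNF ω α, p.1 < α) :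
    Tb b α = ((CNF ω α).map fun p => b ^ Tb b p.1 * onat p.2).sum := by
  rw [Tb_eq]
  exact congrArg _ (List.map_congr_left fun p hp => dif_pos (h p hp))

section OrdinalArith

variable {e z E : Ordinal.{0}} {c q : ℕ}

theorem opow_le_opow_mul_add (z : Ordinal) (hc : 0 < c) : ω ^ e ≤ ω ^ e * c + z :=
  (le_mul_left _ (by exact_mod_cast hc)).trans le_self_add

theorem opow_mul_add_add_opow_mul_of_lt (hz : z < ω ^ e) (h : e < E) (hq : 0 < q) :
    ω ^ e * c + z + ω ^ E * q = ω ^ E * q :=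
  add_of_omega0_opow_le (opow_mul_add_lt_opow (natCast_lt_omega0 c) hz h)
    (le_mul_left _ (by exact_mod_cast hq))

theorem opow_mul_add_add_opow_mul_self (hz : z < ω ^ e) (hq : 0 < q) :
    ω ^ e * c + z + ω ^ e * q = ω ^ e * (c + q : ℕ) := by
  rw [add_assoc, add_of_omega0_opow_le hz (le_mul_left _ (by exact_mod_cast hq)), ← mul_add,
    Nat.cast_add]

theorem add_opow_mul_lt_opow (hz : z < ω ^ e) (h : E < e) : z + ω ^ E * q < ω ^ e :=
  isPrincipal_add_omega0_opow e hz (opow_mul_lt_opow (natCast_lt_omega0 q) h)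

end OrdinalArith

/-- Ordinals whose Cantor normal form is hereditarily finite, i.e. those below `ε₀`; on them `Tb`
evaluates the normal form term by term. -/
inductive IsHereditaryNF : Ordinal.{0} → Prop
  | zero : IsHereditaryNF 0
  | opow_mul_add {e z : Ordinal.{0}} {c : ℕ} : IsHereditaryNF e → IsHereditaryNF z → 0 < c →
      z < ω ^ e → IsHereditaryNF (ω ^ e * c + z)

namespace IsHereditaryNF

variable {α e E : Ordinal.{0}} {c : ℕ}

theorem opow_mul (he : IsHereditaryNF e) (hc : 0 < c) : IsHereditaryNF (ω ^ e * c) := by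
  simpa using he.opow_mul_add zero hc (opow_pos e omega0_pos)

theorem lt_opow (h : IsHereditaryNF α) : α < ω ^ α := by
  induction h with
  | zero => simp
  | opow_mul_add _ _ hc hz ihe _ =>
    exact opow_mul_add_lt_opow (natCast_lt_omega0 _) hz
      (ihe.trans_le (opow_le_opow_mul_add _ hc))

theorem fst_lt_of_mem_CNF (h : IsHereditaryNF α) {p : Ordinal × Ordinal} (hp : p ∈ CNF ω α) :
    p.1 < α := by
  have hα : α ≠ 0 := by rintro rfl; simp at hp
  exact (CNF.fst_le_log hp).trans_lt
    ((lt_opow_iff_log_lt one_lt_omega0 hα).1 h.lt_opow)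

theorem add_opow_mul {x : Ordinal} (hx : IsHereditaryNF x) (hE : IsHereditaryNF E) (q : ℕ) :
    IsHereditaryNF (x + ω ^ E * q) := by
  rcases Nat.eq_zero_or_pos q with rfl | hq
  · simpa using hx
  induction hx with
  | zero => simpa using hE.opow_mul hq
  | @opow_mul_add e z c he hz hc hlt _ ihz =>
    rcases lt_trichotomy e E with h | rfl | h
    · rw [opow_mul_add_add_opow_mul_of_lt hlt h hq]
      exact hE.opow_mul hq
    · rw [opow_mul_add_add_opow_mul_self hlt hq]
      exact he.opow_mul (by omega)
    · rw [add_assoc]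
      exact he.opow_mul_add ihz hc (add_opow_mul_lt_opow hlt h)

end IsHereditaryNF

section Tb

variable {e z E : Ordinal.{0}} {c : ℕ}

theorem Tb_opow_mul_add (b : ℕ) (he : IsHereditaryNF e) (hz : IsHereditaryNF z) (hc : 0 < c)
    (hlt : z < ω ^ e) : Tb b (ω ^ e * c + z) = b ^ Tb b e * c + Tb b z := by
  rw [Tb_eq_sum_of_forall_lt b fun _ => (he.opow_mul_add hz hc hlt).fst_lt_of_mem_CNF,
    CNF.opow_mul_add one_lt_omega0 (by exact_mod_cast hc.ne') (natCast_lt_omega0 c) hlt,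
    List.map_cons, List.sum_cons, onat_natCast,
    Tb_eq_sum_of_forall_lt b fun _ => hz.fst_lt_of_mem_CNF]

theorem Tb_opow_mul (b : ℕ) (he : IsHereditaryNF e) (c : ℕ) :
    Tb b (ω ^ e * c) = b ^ Tb b e * c := by
  rcases Nat.eq_zero_or_pos c with rfl | hc
  · simp
  · simpa using Tb_opow_mul_add b he .zero hc (opow_pos e omega0_pos)

theorem Tb_add_opow_mul_le (b : ℕ) {x : Ordinal} (hx : IsHereditaryNF x) (hE : IsHereditaryNF E)
    (q : ℕ) : Tb b (x + ω ^ E * q) ≤ Tb b x + b ^ Tb b E * q := by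
  rcases Nat.eq_zero_or_pos q with rfl | hq
  · simp
  induction hx with
  | zero => simp [Tb_opow_mul b hE]
  | @opow_mul_add e z c he hz hc hlt _ ihz =>
    rcases lt_trichotomy e E with h | rfl | h
    · rw [opow_mul_add_add_opow_mul_of_lt hlt h hq, Tb_opow_mul b hE]
      exact Nat.le_add_left _ _
    · rw [opow_mul_add_add_opow_mul_self hlt hq, Tb_opow_mul b he, Tb_opow_mul_add b he hz hc hlt,
        Nat.mul_add]
      omega
    · rw [add_assoc, Tb_opow_mul_add b he (hz.add_opow_mul hE q) hc (add_opow_mul_lt_opow hlt h),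
        Tb_opow_mul_add b he hz hc hlt]
      omega

end Tb

section TOrd

theorem TOrd_eq (b n : ℕ) : TOrd b n =
    ((((Nat.digits b n).zipIdx).map Prod.swap).map
      (fun p => if _ : p.1 < n then ω ^ TOrd b p.1 * p.2 else 0)).sum :=
  Nat.strongRecOn_eq _ n

@[simp] theorem TOrd_zero (b : ℕ) : TOrd b 0 = 0 := by
  simp [TOrd_eq]

noncomputable def digitSum (b : ℕ) : ℕ → List ℕ → Ordinal.{0}
  | _, [] => 0
  | i, d :: l => ω ^ TOrd b i * d + digitSum b (i + 1) l

theorem digitSum_append (b : ℕ) (l₁ l₂ : List ℕ) (i : ℕ) :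
    digitSum b i (l₁ ++ l₂) = digitSum b i l₁ + digitSum b (i + l₁.length) l₂ := by
  induction l₁ generalizing i with
  | nil => simp [digitSum]
  | cons d l ih =>
    rw [List.cons_append, digitSum, digitSum, ih, List.length_cons, ← add_assoc,
      Nat.add_right_comm i 1, Nat.add_assoc]

theorem digitSum_replicate_zero (b k i : ℕ) : digitSum b i (List.replicate k 0) = 0 := by
  induction k generalizing i with
  | zero => rfl
  | succ k ih => simp [List.replicate_succ, digitSum, ih]

theorem digitSum_eq_sum_zipIdx (b n : ℕ) (l : List ℕ) (i : ℕ) (h : i + l.length ≤ n) :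
    digitSum b i l = (((l.zipIdx i).map Prod.swap).map
      (fun p => if _ : p.1 < n then ω ^ TOrd b p.1 * (p.2 : Ordinal) else 0)).sum := by
  induction l generalizing i with
  | nil => rfl
  | cons d l ih =>
    simp only [List.length_cons] at h
    simp only [digitSum, List.zipIdx_cons, List.map_cons, Prod.swap_prod_mk, List.sum_cons,
      dif_pos (by omega : i < n), ih (i + 1) (by omega)]

theorem TOrd_eq_digitSum {b : ℕ} (hb : 1 < b) (n : ℕ) :
    TOrd b n = digitSum b 0 (Nat.digits b n) := by
  refine (TOrd_eq b n).trans (digitSum_eq_sum_zipIdx b n _ 0 ?_).symm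
  rw [zero_add, Nat.digits_length_le_iff hb]
  exact Nat.lt_pow_self hb

theorem TOrd_add_pow_mul {b r L q : ℕ} (hb : 1 < b) (hr : r < b ^ L) (hq : 0 < q) (hqb : q < b) :
    TOrd b (r + b ^ L * q) = TOrd b r + ω ^ TOrd b L * q := by
  have hlen : (Nat.digits b r).length ≤ L := (Nat.digits_length_le_iff hb r).2 hr
  have hdigits : Nat.digits b (r + b ^ L * q) =
      Nat.digits b r ++ List.replicate (L - (Nat.digits b r).length) 0 ++ [q] := by
    rw [← Nat.digits_of_lt b q hq.ne' hqb, Nat.digits_append_zeroes_append_digits hb hq,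
      Nat.add_sub_cancel' hlen]
  rw [TOrd_eq_digitSum hb, hdigits, digitSum_append, digitSum_append, digitSum_replicate_zero,
    ← TOrd_eq_digitSum hb, List.length_append, List.length_replicate, Nat.add_sub_cancel' hlen]
  simp [digitSum]


theorem TOrd_of_ne_zero {b n : ℕ} (hb : 1 < b) (hn : n ≠ 0) :
    TOrd b n = TOrd b (n % b ^ Nat.log b n) +
      ω ^ TOrd b (Nat.log b n) * (n / b ^ Nat.log b n : ℕ) := by
  conv_lhs => rw [← Nat.mod_add_div n (b ^ Nat.log b n)]
  exact TOrd_add_pow_mul hb (Nat.mod_lt n (Nat.pow_log_pos b n)) (Nat.div_pow_log_pos b hn)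
    (Nat.div_pow_log_lt hb n)

theorem isHereditaryNF_TOrd {b : ℕ} (hb : 1 < b) (n : ℕ) : IsHereditaryNF (TOrd b n) := by
  induction n using Nat.strongRecOn with
  | ind n IH =>
  rcases eq_or_ne n 0 with rfl | hn
  · simpa using IsHereditaryNF.zero
  rw [TOrd_of_ne_zero hb hn]
  exact (IH _ (Nat.mod_pow_log_lt_self b hn)).add_opow_mul (IH _ (Nat.log_lt_self b hn)) _

end TOrd


/-- The paper's `T_ω^b(n)`. -/
noncomputable def ordRep (b n : ℕ) : Ordinal.{0} :=
  if _ : n = 0 then 0 else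
    ω ^ ordRep b (Nat.log b n) * (n / b ^ Nat.log b n : ℕ) + ordRep b (n % b ^ Nat.log b n)
termination_by n
decreasing_by
  · exact Nat.log_lt_self b ‹_›
  · exact Nat.mod_pow_log_lt_self b ‹_›

/-- The paper's `S_c^b(n)`. -/
def rebase (b c n : ℕ) : ℕ :=
  if _ : n = 0 then 0 else
    c ^ rebase b c (Nat.log b n) * (n / b ^ Nat.log b n) + rebase b c (n % b ^ Nat.log b n)
termination_by n
decreasing_by
  · exact Nat.log_lt_self b ‹_›
  · exact Nat.mod_pow_log_lt_self b ‹_›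

@[simp] theorem ordRep_zero (b : ℕ) : ordRep b 0 = 0 := by
  rw [ordRep, dif_pos rfl]

theorem ordRep_of_ne_zero (b : ℕ) {n : ℕ} (hn : n ≠ 0) : ordRep b n =
    ω ^ ordRep b (Nat.log b n) * (n / b ^ Nat.log b n : ℕ) + ordRep b (n % b ^ Nat.log b n) := by
  rw [ordRep, dif_neg hn]

@[simp] theorem rebase_zero (b c : ℕ) : rebase b c 0 = 0 := by
  rw [rebase, dif_pos rfl]

theorem rebase_of_ne_zero (b c : ℕ) {n : ℕ} (hn : n ≠ 0) : rebase b c n =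
    c ^ rebase b c (Nat.log b n) * (n / b ^ Nat.log b n) + rebase b c (n % b ^ Nat.log b n) := by
  rw [rebase, dif_neg hn]

section ordRep

variable {b : ℕ}

theorem opow_ordRep_log_le (b : ℕ) {n : ℕ} (hn : n ≠ 0) :
    ω ^ ordRep b (Nat.log b n) ≤ ordRep b n := by
  rw [ordRep_of_ne_zero b hn]
  exact opow_le_opow_mul_add _ (Nat.div_pow_log_pos b hn)

theorem ordRep_lt_opow_of_ordRep_log_lt {n : ℕ} {e : Ordinal} (hn : n ≠ 0)
    (hmod : ordRep b (n % b ^ Nat.log b n) < ω ^ ordRep b (Nat.log b n))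
    (he : ordRep b (Nat.log b n) < e) : ordRep b n < ω ^ e := by
  rw [ordRep_of_ne_zero b hn]
  exact opow_mul_add_lt_opow (natCast_lt_omega0 _) hmod he

/-- Strict monotonicity and the bound on the remainder term are proved together: each needs the
other at smaller arguments. -/
theorem ordRep_lt_and_ordRep_mod_lt (b n : ℕ) :
    (∀ m < n, ordRep b m < ordRep b n) ∧
      ordRep b (n % b ^ Nat.log b n) < ω ^ ordRep b (Nat.log b n) := by
  induction n using Nat.strongRecOn with
  | ind n IH =>
  rcases eq_or_ne n 0 with rfl | hn
  · simp
  set L := Nat.log b n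
  have hL : L < n := Nat.log_lt_self b hn
  have hr : n % b ^ L < n := Nat.mod_pow_log_lt_self b hn
  refine ⟨fun m hm => ?_, ?_⟩
  · rcases eq_or_ne m 0 with rfl | hm0
    · exact ordRep_zero b ▸ (opow_pos _ omega0_pos).trans_le (opow_ordRep_log_le b hn)
    rcases (Nat.log_mono_right (b := b) hm.le).lt_or_eq with hlog | hlog
    · exact (ordRep_lt_opow_of_ordRep_log_lt hm0 (IH m hm).2 ((IH L hL).1 _ hlog)).trans_le
        (opow_ordRep_log_le b hn)
    have hmod := (IH m hm).2
    rw [ordRep_of_ne_zero b hm0, ordRep_of_ne_zero b hn, hlog] at *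
    rcases (Nat.div_le_div_right (c := b ^ L) hm.le).lt_or_eq with hdiv | hdiv
    · exact (opow_mul_add_lt_opow_mul hmod (by exact_mod_cast hdiv)).trans_le le_self_add
    · have hmod_lt : m % b ^ L < n % b ^ L := by
        have := Nat.div_add_mod m (b ^ L)
        have := Nat.div_add_mod n (b ^ L)
        rw [hdiv] at *
        omega
      rw [hdiv, add_lt_add_iff_left]
      exact (IH _ hr).1 _ hmod_lt
  · rcases eq_or_ne (n % b ^ L) 0 with h0 | h0
    · rw [h0, ordRep_zero]
      exact opow_pos _ omega0_pos
    exact ordRep_lt_opow_of_ordRep_log_lt h0 (IH _ hr).2 ((IH L hL).1 _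
      (Nat.log_lt_of_lt_pow h0 (Nat.mod_lt n (Nat.pow_log_pos b n))))

theorem ordRep_strictMono (b : ℕ) : StrictMono (ordRep b) :=
  fun m n h => (ordRep_lt_and_ordRep_mod_lt b n).1 m h

theorem ordRep_lt_opow_of_lt_pow {k j : ℕ} (h : k < b ^ j) : ordRep b k < ω ^ ordRep b j := by
  rcases eq_or_ne k 0 with rfl | hk
  · simpa using opow_pos _ omega0_pos
  exact ordRep_lt_opow_of_ordRep_log_lt hk (ordRep_lt_and_ordRep_mod_lt b k).2
    (ordRep_strictMono b (Nat.log_lt_of_lt_pow hk h))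

theorem ordRep_pow_mul_add {e q z : ℕ} (hq : 0 < q) (hqb : q < b) (hz : z < b ^ e) :
    ordRep b (b ^ e * q + z) = ω ^ ordRep b e * q + ordRep b z := by
  have hpos : 0 < b ^ e := Nat.pow_pos (by omega)
  rw [ordRep_of_ne_zero b (by have := Nat.mul_pos hpos hq; omega), Nat.log_pow_mul_add hq hqb hz,
    Nat.mul_add_div hpos, Nat.div_eq_of_lt hz, add_zero, Nat.mul_add_mod, Nat.mod_eq_of_lt hz]

theorem ordRep_pow (hb : 1 < b) (e : ℕ) : ordRep b (b ^ e) = ω ^ ordRep b e := by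
  simpa using ordRep_pow_mul_add (z := 0) one_pos hb (by positivity)

end ordRep

section rebase

variable {b c : ℕ}

theorem ordRep_rebase (hb : 1 < b) (hbc : b ≤ c) (n : ℕ) :
    ordRep c (rebase b c n) = ordRep b n := by
  induction n using Nat.strongRecOn with
  | ind n IH =>
  rcases eq_or_ne n 0 with rfl | hn
  · simp
  set L := Nat.log b n
  have hL := IH L (Nat.log_lt_self b hn)
  have hr := IH _ (Nat.mod_pow_log_lt_self b hn)
  have hmod : rebase b c (n % b ^ L) < c ^ rebase b c L := by
    rw [← (ordRep_strictMono c).lt_iff_lt, hr, ordRep_pow (hb.trans_le hbc), hL]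
    exact ordRep_lt_opow_of_lt_pow (Nat.mod_lt n (Nat.pow_log_pos b n))
  rw [rebase_of_ne_zero b c hn, ordRep_pow_mul_add (Nat.div_pow_log_pos b hn)
    ((Nat.div_pow_log_lt hb n).trans_le hbc) hmod, hL, hr, ordRep_of_ne_zero b hn]

theorem rebase_strictMono (hb : 1 < b) (hbc : b ≤ c) : StrictMono (rebase b c) := by
  intro m n h
  rw [← (ordRep_strictMono c).lt_iff_lt, ordRep_rebase hb hbc, ordRep_rebase hb hbc]
  exact ordRep_strictMono b h

theorem Sba_le_rebase (hb : 1 < b) (hc : 0 < c) (n : ℕ) : Sba b c n ≤ rebase b c n := by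
  induction n using Nat.strongRecOn with
  | ind n IH =>
  rcases eq_or_ne n 0 with rfl | hn
  · simp [Sba]
  have hL := IH _ (Nat.log_lt_self b hn)
  have hr := IH _ (Nat.mod_pow_log_lt_self b hn)
  unfold Sba at *
  rw [TOrd_of_ne_zero hb hn, rebase_of_ne_zero b c hn, add_comm (c ^ _ * _)]
  calc _ ≤ _ := Tb_add_opow_mul_le c (isHereditaryNF_TOrd hb _) (isHereditaryNF_TOrd hb _) _
    _ ≤ _ := by gcongr

end rebase

theorem exists_forall_ge_eq_zero_of_le_rebase_sub_one {b g : ℕ → ℕ} (hb : ∀ i, 1 < b i)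
    (hb_succ : ∀ i, b i ≤ b (i + 1))
    (hg : ∀ i, g (i + 1) ≤ rebase (b i) (b (i + 1)) (g i) - 1) :
    ∃ k, ∀ i ≥ k, g i = 0 := by
  have hdesc : ∀ i, g i ≠ 0 → ordRep (b (i + 1)) (g (i + 1)) < ordRep (b i) (g i) := by
    intro i hi
    have hpos : 0 < rebase (b i) (b (i + 1)) (g i) := by
      simpa using rebase_strictMono (hb i) (hb_succ i) (Nat.pos_of_ne_zero hi)
    rw [← ordRep_rebase (hb i) (hb_succ i)]
    exact ordRep_strictMono _ ((hg i).trans_lt (Nat.sub_lt hpos one_pos))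
  obtain ⟨k, hk⟩ := WellFounded.not_rel_apply_succ (r := (· < ·)) fun i => ordRep (b i) (g i)
  have hk0 : g k = 0 := by_contra fun h => hk (hdesc k h)
  refine ⟨k, Nat.le_induction hk0 fun i _ hi => ?_⟩
  simpa [hi] using hg i

theorem goodstein_general (f : ℕ → ℕ) (hf : Monotone f) (hf0 : 2 ≤ f 0) (g : ℕ → ℕ)
    (hgs : ∀ i, g (i + 1) = Sba (f i) (f (i + 1)) (g i) - 1) :
    ∃ k, ∀ i ≥ k, g i = 0 := by
  have hf1 : ∀ i, 1 < f i := fun i => lt_of_lt_of_le (by omega) (hf0.trans (hf i.zero_le))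
  refine exists_forall_ge_eq_zero_of_le_rebase_sub_one hf1 (fun i => hf i.le_succ) fun i => ?_
  rw [hgs i]
  exact Nat.sub_le_sub_right (Sba_le_rebase (hf1 i) (hf1 (i + 1)).pos _) 1

/-- Goodstein's theorem: for every non-decreasing `f : ℕ → ℕ` with `f 0 ≥ 2`
and every `m`, the Goodstein sequence `m₀ = m`,
`m_{i+1} = S_{f(i+1)}^{f(i)}(m_i) ∸ 1` eventually terminates: there is `k`
with `m_i = 0` for all `i ≥ k`. -/
theorem goodstein (f : ℕ → ℕ) (hf : Monotone f) (hf0 : 2 ≤ f 0)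
    (m : ℕ) (g : ℕ → ℕ) (hg0 : g 0 = m)
    (hgs : ∀ i, g (i + 1) = Sba (f i) (f (i + 1)) (g i) - 1) :
    ∃ k, ∀ i ≥ k, g i = 0 :=
  goodstein_general f hf hf0 g hgs
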